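/- Let h(z) be a nonzero complex polynomial of degree n having all its zeros in the closed unit disk |z| ≤ 1, let d > n, and let λ be a complex number with |λ| = 1. Then the polynomial P(z) = z^(d-n) h(z) + λ h*(z), where h*(z) = z^n · conj(h)(1/z) (i.e., the polynomial whose coefficients are the complex conjugates of those of h, in reversed order), has all its zeros on the unit circle |z| = 1. -/

import Mathlib

/-!
Over ℂ write `h = c ∏ (X - a)` over its roots, so that `h* = conj c ∏ (1 - conj a X)`. The
identity `‖z - a‖² - ‖1 - conj a z‖² = (‖z‖² - 1)(1 - ‖a‖²)` compares the factors when `‖a‖ ≤ 1`: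
`‖h*(z)‖ ≤ ‖h(z)‖` for `‖z‖ ≥ 1`, `‖h(z)‖ ≤ ‖h*(z)‖` for `‖z‖ ≤ 1`, and `h*` has no zero in the
open disk. A zero of `X^k h + λ h*` with `k ≥ 1` and `‖λ‖ = 1` satisfies
`‖z‖^k ‖h(z)‖ = ‖h*(z)‖`, which these comparisons rule out both inside and outside the circle.
-/

open Polynomial

noncomputable def conjReciprocal (h : Polynomial ℂ) : Polynomial ℂ :=
  (h.map (starRingEnd ℂ)).reverse

open ComplexConjugate

lemma Multiset.norm_prod_map {ι 𝕜 : Type*} [NormedField 𝕜] (s : Multiset ι) (f : ι → 𝕜) :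
    ‖(s.map f).prod‖ = (s.map fun i => ‖f i‖).prod :=
  (map_multiset_prod (normHom : 𝕜 →*₀ ℝ) _).trans (by rw [Multiset.map_map]; rfl)

namespace Polynomial

variable {R : Type*}

lemma reverse_X [Semiring R] : (X : R[X]).reverse = 1 := by
  rw [← mul_one (X : R[X]), reverse_X_mul, ← C_1, reverse_C]

lemma reverse_X_sub_C [Ring R] [Nontrivial R] (a : R) : (X - C a).reverse = 1 - C a * X := by
  rw [sub_eq_add_neg, ← C_neg, reverse_add_C, natDegree_X, reverse_X, C_neg, pow_one, neg_mul,
    sub_eq_add_neg]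

lemma reverse_multiset_prod [CommSemiring R] [NoZeroDivisors R] (s : Multiset R[X]) :
    s.prod.reverse = (s.map reverse).prod := by
  induction s using Multiset.induction with
  | empty => simpa using reverse_C (1 : R)
  | cons p s ih => simp [ih]

end Polynomial

namespace Complex

lemma norm_sub_sq_sub_norm_one_sub_conj_mul_sq (a z : ℂ) :
    ‖z - a‖ ^ 2 - ‖1 - conj a * z‖ ^ 2 = (‖z‖ ^ 2 - 1) * (1 - ‖a‖ ^ 2) := by
  simp only [← normSq_eq_norm_sq, normSq_apply, sub_re, sub_im, mul_re, mul_im, conj_re, conj_im,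
    one_re, one_im]
  ring

variable {a z : ℂ}

lemma norm_one_sub_conj_mul_le_norm_sub (ha : ‖a‖ ≤ 1) (hz : 1 ≤ ‖z‖) :
    ‖1 - conj a * z‖ ≤ ‖z - a‖ := by
  have hdiff := norm_sub_sq_sub_norm_one_sub_conj_mul_sq a z
  have : 0 ≤ (‖z‖ ^ 2 - 1) * (1 - ‖a‖ ^ 2) :=
    mul_nonneg (by nlinarith) (by nlinarith [norm_nonneg a])
  exact le_of_sq_le_sq (by linarith) (norm_nonneg _)

lemma norm_sub_le_norm_one_sub_conj_mul (ha : ‖a‖ ≤ 1) (hz : ‖z‖ ≤ 1) :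
    ‖z - a‖ ≤ ‖1 - conj a * z‖ := by
  have hdiff := norm_sub_sq_sub_norm_one_sub_conj_mul_sq a z
  have : (‖z‖ ^ 2 - 1) * (1 - ‖a‖ ^ 2) ≤ 0 :=
    mul_nonpos_of_nonpos_of_nonneg (by nlinarith [norm_nonneg z]) (by nlinarith [norm_nonneg a])
  exact le_of_sq_le_sq (by linarith) (norm_nonneg _)

lemma one_sub_conj_mul_ne_zero (ha : ‖a‖ ≤ 1) (hz : ‖z‖ < 1) : 1 - conj a * z ≠ 0 := by
  refine sub_ne_zero.2 fun h => ?_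
  have : ‖conj a * z‖ < 1 := by
    rw [norm_mul, norm_conj]
    exact mul_lt_one_of_nonneg_of_lt_one_right ha (norm_nonneg z) hz
  simp [← h] at this

end Complex

lemma map_conj_eq_prod_roots (h : ℂ[X]) :
    h.map (starRingEnd ℂ) =
      C (conj h.leadingCoeff) * (h.roots.map fun a => X - C (conj a)).prod := by
  conv_lhs => rw [(IsAlgClosed.splits h).eq_prod_roots]
  simp [Polynomial.map_multiset_prod, Multiset.map_map]

lemma conjReciprocal_eq_prod_roots (h : ℂ[X]) :
    conjReciprocal h =
      C (conj h.leadingCoeff) * (h.roots.map fun a => 1 - C (conj a) * X).prod := by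
  simp [conjReciprocal, map_conj_eq_prod_roots, reverse_multiset_prod, Multiset.map_map,
    reverse_X_sub_C]

lemma norm_eval_eq_prod_roots (h : ℂ[X]) (z : ℂ) :
    ‖h.eval z‖ = ‖h.leadingCoeff‖ * (h.roots.map fun a => ‖z - a‖).prod := by
  rw [(IsAlgClosed.splits h).eval_eq_prod_roots, norm_mul, Multiset.norm_prod_map]

lemma norm_eval_conjReciprocal (h : ℂ[X]) (z : ℂ) :
    ‖(conjReciprocal h).eval z‖ =
      ‖h.leadingCoeff‖ * (h.roots.map fun a => ‖1 - conj a * z‖).prod := by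
  rw [conjReciprocal_eq_prod_roots, eval_mul, eval_C, eval_multiset_prod, Multiset.map_map,
    norm_mul, Complex.norm_conj, Multiset.norm_prod_map]
  simp

section RootsInClosedDisk

variable {h : ℂ[X]} {z : ℂ}

lemma norm_eval_conjReciprocal_le_of_one_le_norm (hroots : ∀ a ∈ h.roots, ‖a‖ ≤ 1)
    (hz : 1 ≤ ‖z‖) : ‖(conjReciprocal h).eval z‖ ≤ ‖h.eval z‖ := by
  rw [norm_eval_conjReciprocal, norm_eval_eq_prod_roots]
  gcongr
  refine Multiset.prod_map_le_prod_map₀ _ _ (fun _ _ => norm_nonneg _) fun a ha => ?_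
  exact Complex.norm_one_sub_conj_mul_le_norm_sub (hroots a ha) hz

lemma norm_eval_le_norm_eval_conjReciprocal_of_norm_le_one (hroots : ∀ a ∈ h.roots, ‖a‖ ≤ 1)
    (hz : ‖z‖ ≤ 1) : ‖h.eval z‖ ≤ ‖(conjReciprocal h).eval z‖ := by
  rw [norm_eval_conjReciprocal, norm_eval_eq_prod_roots]
  gcongr
  refine Multiset.prod_map_le_prod_map₀ _ _ (fun _ _ => norm_nonneg _) fun a ha => ?_
  exact Complex.norm_sub_le_norm_one_sub_conj_mul (hroots a ha) hz

lemma eval_conjReciprocal_ne_zero_of_norm_lt_one (hroots : ∀ a ∈ h.roots, ‖a‖ ≤ 1)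
    (hh : h ≠ 0) (hz : ‖z‖ < 1) : (conjReciprocal h).eval z ≠ 0 := by
  rw [conjReciprocal_eq_prod_roots, eval_mul, eval_C, eval_multiset_prod, Multiset.map_map]
  refine mul_ne_zero (by simpa using hh) (Multiset.prod_ne_zero ?_)
  simp only [Multiset.mem_map, Function.comp_apply, not_exists, not_and]
  intro a ha h0
  exact Complex.one_sub_conj_mul_ne_zero (hroots a ha) hz (by simpa using h0)

end RootsInClosedDisk

theorem stmt_0 (h : Polynomial ℂ) (n d : ℕ) (lam : ℂ)
    (hh : h ≠ 0) (hd : n < d)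
    (hz : ∀ z : ℂ, h.eval z = 0 → ‖z‖ ≤ 1)
    (hlam : ‖lam‖ = 1) :
    ∀ z : ℂ, (X ^ (d - n) * h + C lam * conjReciprocal h).eval z = 0 →
      ‖z‖ = 1 := by
  intro z hPz
  have hroots : ∀ a ∈ h.roots, ‖a‖ ≤ 1 := fun a ha => hz a (isRoot_of_mem_roots ha)
  have hk : d - n ≠ 0 := by omega
  have hnorm : ‖z‖ ^ (d - n) * ‖h.eval z‖ = ‖(conjReciprocal h).eval z‖ := by
    rw [eval_add, eval_mul, eval_mul, eval_pow, eval_X, eval_C, add_eq_zero_iff_eq_neg] at hPz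
    simpa [hlam] using congrArg (‖·‖) hPz
  rcases lt_trichotomy ‖z‖ 1 with hlt | heq | hgt
  · refine absurd hnorm (ne_of_lt ?_)
    have hpos := norm_pos_iff.2 (eval_conjReciprocal_ne_zero_of_norm_lt_one hroots hh hlt)
    calc ‖z‖ ^ (d - n) * ‖h.eval z‖
        ≤ ‖z‖ ^ (d - n) * ‖(conjReciprocal h).eval z‖ := by
          gcongr; exact norm_eval_le_norm_eval_conjReciprocal_of_norm_le_one hroots hlt.le
      _ < ‖(conjReciprocal h).eval z‖ :=
          mul_lt_of_lt_one_left hpos (pow_lt_one₀ (norm_nonneg z) hlt hk)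
  · exact heq
  · refine absurd hnorm (ne_of_gt ?_)
    have hpos : 0 < ‖h.eval z‖ := norm_pos_iff.2 fun h0 => (hz z h0).not_gt hgt
    calc ‖(conjReciprocal h).eval z‖
        ≤ ‖h.eval z‖ := norm_eval_conjReciprocal_le_of_one_le_norm hroots hgt.le
      _ < ‖z‖ ^ (d - n) * ‖h.eval z‖ := lt_mul_of_one_lt_left hpos (one_lt_pow₀ hgt hk)
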